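/- arXiv:1903.11654 — 2 statements merged into one kernel-verified Lean document; each statement's English description precedes it below -/
import Mathlib

section
/- Let H be a real Hilbert space, A : H → H a bounded self-adjoint invertible linear operator with ⟨Aw,w⟩ ≥ 0 for all w, S and Z real Banach spaces, Φ : S × Z → ℝ a nonnegative functional, and B* : S* → H a bounded linear operator with Φ Fréchet differentiable in its first variable. Let τ > 0, 0 < η < 4, and suppose the CFL-type condition holds: Φ(Σ, z) ≥ (τ²/(4 − η))·⟨A⁻¹ B*Φ′_Σ(Σ, ẑ), B*Φ′_Σ(Σ, ẑ)⟩ for all Σ ∈ S and z, ẑ ∈ Z under consideration. If v, v′ ∈ H satisfy the unforced explicit velocity update A(v′ − v) = −τ·B*Φ′_Σ(Σ, z), then the twisted discrete energy is coercive: (1/2)⟨A v′, v⟩ + Φ(Σ, z) ≥ (1/2)⟨A m, m⟩ + ((4 + η)/8)·Φ(Σ, z) ≥ 0, where m := (v′ + v)/2. -/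
open scoped RealInnerProductSpace

/-- **Coercivity of the twisted discrete energy under the CFL condition.**
Under the CFL-type condition `Φ(Σ,z) ≥ τ²/(4−η) ⟨A⁻¹ B*Φ'_Σ(Σ,zh), B*Φ'_Σ(Σ,zh)⟩`
and the unforced explicit velocity update `A(v′ − v) = −τ B*Φ'_Σ(Σ,z)`, the twisted
discrete energy `(1/2)⟨A v′, v⟩ + Φ(Σ,z)` dominates
`(1/2)⟨A m, m⟩ + ((4+η)/8) Φ(Σ,z) ≥ 0`, where `m = (v′+v)/2`. -/
theorem twisted_energy_coercive_CFL
    {H S Z : Type*}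
    [NormedAddCommGroup H] [InnerProductSpace ℝ H] [CompleteSpace H]
    [NormedAddCommGroup S] [NormedSpace ℝ S] [CompleteSpace S]
    [NormedAddCommGroup Z] [NormedSpace ℝ Z] [CompleteSpace Z]
    (A Ainv : H →L[ℝ] H)
    (hA_symm : ∀ x y : H, ⟪A x, y⟫ = ⟪x, A y⟫)
    (hA_pos : ∀ w : H, 0 ≤ ⟪A w, w⟫)
    (hAinv₁ : ∀ x, A (Ainv x) = x) (hAinv₂ : ∀ x, Ainv (A x) = x)
    (Φ : S → Z → ℝ) (hΦ_nonneg : ∀ P z, 0 ≤ Φ P z)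
    (DΦ : S → Z → (S →L[ℝ] ℝ))
    (hDΦ : ∀ (P : S) (z : Z), HasFDerivAt (fun P' => Φ P' z) (DΦ P z) P)
    (Bstar : (S →L[ℝ] ℝ) →L[ℝ] H)
    (τ η : ℝ) (hτ : 0 < τ) (hη₀ : 0 < η) (hη₄ : η < 4)
    (hCFL : ∀ (P : S) (z zh : Z),
      Φ P z ≥ τ^2 / (4 - η) * ⟪Ainv (Bstar (DΦ P zh)), Bstar (DΦ P zh)⟫)
    (P : S) (z : Z) (v v' : H)
    (hupd : A (v' - v) = -(τ • Bstar (DΦ P z))) :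
    (1/2) * ⟪A v', v⟫ + Φ P z
        ≥ (1/2) * ⟪A ((2:ℝ)⁻¹ • (v' + v)), (2:ℝ)⁻¹ • (v' + v)⟫ + ((4 + η)/8) * Φ P z
    ∧ 0 ≤ (1/2) * ⟪A ((2:ℝ)⁻¹ • (v' + v)), (2:ℝ)⁻¹ • (v' + v)⟫ + ((4 + η)/8) * Φ P z := by

  set Sv := Bstar (DΦ P z) with hSv
  -- the velocity increment
  have hd : v' - v = -(τ • Ainv Sv) := by
    have := congrArg Ainv hupd
    simpa [hAinv₂, map_neg, map_smul] using this
  -- cross term symmetry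
  have hcross : ⟪A v, v'⟫ = ⟪A v', v⟫ := by
    rw [hA_symm, real_inner_comm]
  have e1 : ⟪A (v' + v), v' + v⟫ = ⟪A v', v'⟫ + 2 * ⟪A v', v⟫ + ⟪A v, v⟫ := by
    simp only [map_add, inner_add_left, inner_add_right, hcross]; ring
  have e2 : ⟪A (v' - v), v' - v⟫ = ⟪A v', v'⟫ - 2 * ⟪A v', v⟫ + ⟪A v, v⟫ := by
    simp only [map_sub, inner_sub_left, inner_sub_right, hcross]; ring
  have hm : ⟪A ((2:ℝ)⁻¹ • (v' + v)), (2:ℝ)⁻¹ • (v' + v)⟫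
      = (1/4) * ⟪A (v' + v), v' + v⟫ := by
    rw [map_smul, real_inner_smul_left, real_inner_smul_right]; ring
  -- ⟨A d, d⟩ = τ² ⟨Ainv S, S⟩
  have hdd : ⟪A (v' - v), v' - v⟫ = τ^2 * ⟪Ainv Sv, Sv⟫ := by
    rw [hupd, hd]
    rw [inner_neg_neg, real_inner_smul_left, real_inner_smul_right,
      real_inner_comm]
    ring
  have hCFL' := hCFL P z z
  have hΦ := hΦ_nonneg P z
  have hmid := hA_pos ((2:ℝ)⁻¹ • (v' + v))
  have hdd' : ⟪A (v' - v), v' - v⟫ ≤ (4 - η) * Φ P z := by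
    have h4 : (0:ℝ) < 4 - η := by linarith
    rw [hdd, hSv]
    rw [ge_iff_le, div_mul_eq_mul_div, div_le_iff₀ h4] at hCFL'
    nlinarith [hCFL']
  constructor
  · have key : ⟪A v', v⟫ = ⟪A ((2:ℝ)⁻¹ • (v' + v)), (2:ℝ)⁻¹ • (v' + v)⟫
        - (1/4) * ⟪A (v' - v), v' - v⟫ := by
      rw [hm, e1, e2]; ring
    rw [key]; linarith
  · have h8 : (0:ℝ) ≤ (4 + η)/8 * Φ P z := by positivity
    linarith
end

section
/- Exact energy conservation for the unforced two-step leap-frog scheme. Let H and S be real Hilbert spaces, A : H → H and W : S → S bounded self-adjoint invertible linear operators, and E : H → S a bounded linear operator with adjoint E* : S → H. Let τ > 0 and let sequences (v^k)_{k≥0} in H and (Σ^{k+1/2})_{k≥0} in S satisfy, for all k ≥ 1, Σ^{k+1/2} = Σ^{k−1/2} + τ·W E v^k and, for all k ≥ 0, A v^{k+1} = A v^k − τ·E* Σ^{k+1/2}. Then the discrete energy 𝔈^{k} := (1/2)⟨A v^{k}, v^{k−1}⟩ + (1/2)⟨W⁻¹ Σ^{k−1/2}, Σ^{k−1/2}⟩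 is conserved: 𝔈^{k} = 𝔈^{1} for every k ≥ 1. -/
open scoped RealInnerProductSpace

/-!
Because `A` is symmetric, the change of the twisted kinetic
energy over one step is `⟪A v^{k+1} - A v^{k-1}, v^k⟫`, which two velocity updates turn into
`-τ ⟪Σ^{k+1/2} + Σ^{k-1/2}, E v^k⟫`.
Since `W⁻¹` is symmetric, the change of the stored energy is
`⟪W⁻¹(Σ^{k+1/2} - Σ^{k-1/2}), Σ^{k+1/2} + Σ^{k-1/2}⟫ = τ ⟪E v^k, Σ^{k+1/2} + Σ^{k-1/2}⟫`,
and the two changes cancel.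
-/

namespace LinearMap

variable {H : Type*} [NormedAddCommGroup H] [InnerProductSpace ℝ H]

theorem IsSymmetric.inner_apply_sub_inner_apply {T : H →ₗ[ℝ] H} (hT : T.IsSymmetric)
    (x y z : H) : ⟪T z, y⟫ - ⟪T y, x⟫ = ⟪T z - T x, y⟫ := by
  rw [inner_sub_left, hT x y, real_inner_comm x]

theorem IsSymmetric.inner_apply_self_sub_inner_apply_self {T : H →ₗ[ℝ] H}
    (hT : T.IsSymmetric) (x y : H) : ⟪T x, x⟫ - ⟪T y, y⟫ = ⟪T (x - y), x + y⟫ := by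
  rw [map_sub, inner_sub_left, inner_add_right, inner_add_right, hT x y, real_inner_comm (T y) x]
  ring

theorem IsSymmetric.of_rightInverse {T T' : H →ₗ[ℝ] H} (hT : T.IsSymmetric)
    (h : ∀ x, T (T' x) = x) : T'.IsSymmetric := fun x y => by
  calc ⟪T' x, y⟫ = ⟪T' x, T (T' y)⟫ := by rw [h]
    _ = ⟪x, T' y⟫ := by rw [← hT, h]

end LinearMap

section LeapFrog

variable {H S : Type*} [NormedAddCommGroup H] [InnerProductSpace ℝ H]
  [NormedAddCommGroup S] [InnerProductSpace ℝ S]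

theorem leapfrog_step_energy_eq {A : H →ₗ[ℝ] H} {W Winv : S →ₗ[ℝ] S} {E : H →ₗ[ℝ] S}
    {Estar : S →ₗ[ℝ] H} (hA : A.IsSymmetric) (hW : W.IsSymmetric)
    (hWinv₁ : ∀ x, W (Winv x) = x) (hWinv₂ : ∀ x, Winv (W x) = x)
    (hadj : ∀ σ w, ⟪Estar σ, w⟫ = ⟪σ, E w⟫) {τ : ℝ} {u₀ u₁ u₂ : H} {σ₀ σ₁ : S}
    (hσ : σ₁ = σ₀ + τ • W (E u₁))
    (hu₂ : A u₂ = A u₁ - τ • Estar σ₁) (hu₁ : A u₁ = A u₀ - τ • Estar σ₀) :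
    ⟪A u₂, u₁⟫ + ⟪Winv σ₁, σ₁⟫ = ⟪A u₁, u₀⟫ + ⟪Winv σ₀, σ₀⟫ := by
  have kinetic : ⟪A u₂, u₁⟫ - ⟪A u₁, u₀⟫ = -τ * ⟪σ₁ + σ₀, E u₁⟫ := by
    have hdiff : A u₂ - A u₀ = -τ • Estar (σ₁ + σ₀) := by
      rw [hu₂, hu₁, map_add]
      module
    rw [hA.inner_apply_sub_inner_apply, hdiff, real_inner_smul_left, hadj]
  have stored : ⟪Winv σ₁, σ₁⟫ - ⟪Winv σ₀, σ₀⟫ = τ * ⟪σ₁ + σ₀, E u₁⟫ := by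
    have hjump : Winv (σ₁ - σ₀) = τ • E u₁ := by
      rw [hσ, add_sub_cancel_left, map_smul, hWinv₂]
    rw [(hW.of_rightInverse hWinv₁).inner_apply_self_sub_inner_apply_self, hjump,
      real_inner_smul_left, real_inner_comm]
  linarith

end LeapFrog

theorem leapfrog_energy_conservation_general
    {H S : Type*}
    [NormedAddCommGroup H] [InnerProductSpace ℝ H]
    [NormedAddCommGroup S] [InnerProductSpace ℝ S]
    (A : H →L[ℝ] H) (W Winv : S →L[ℝ] S)
    (hA_symm : ∀ x y : H, ⟪A x, y⟫ = ⟪x, A y⟫)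
    (hW_symm : ∀ x y : S, ⟪W x, y⟫ = ⟪x, W y⟫)
    (hWinv₁ : ∀ x, W (Winv x) = x) (hWinv₂ : ∀ x, Winv (W x) = x)
    (E : H →L[ℝ] S) (Estar : S →L[ℝ] H)
    (hadj : ∀ (σ : S) (w : H), ⟪Estar σ, w⟫ = ⟪σ, E w⟫)
    (τ : ℝ)
    (v : ℕ → H) (Shalf : ℕ → S)
    (hstress : ∀ k : ℕ, 1 ≤ k → Shalf k = Shalf (k - 1) + τ • W (E (v k)))
    (hvel : ∀ k : ℕ, A (v (k + 1)) = A (v k) - τ • Estar (Shalf k)) :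
    ∀ k : ℕ, 1 ≤ k →
      (1/2) * ⟪A (v k), v (k - 1)⟫ + (1/2) * ⟪Winv (Shalf (k - 1)), Shalf (k - 1)⟫
        = (1/2) * ⟪A (v 1), v 0⟫ + (1/2) * ⟪Winv (Shalf 0), Shalf 0⟫ := by
  intro k hk
  induction k, hk using Nat.le_induction with
  | base => rfl
  | succ k hk ih =>
    obtain ⟨m, rfl⟩ := Nat.exists_eq_add_of_le' hk
    have step := leapfrog_step_energy_eq (A := (A : H →ₗ[ℝ] H)) (W := (W : S →ₗ[ℝ] S))
      (Winv := Winv) (E := E) (Estar := Estar) hA_symm hW_symm hWinv₁ hWinv₂ hadj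
      (hstress (m + 1) le_add_self) (hvel (m + 1)) (hvel m)
    simp only [ContinuousLinearMap.coe_coe, Nat.add_sub_cancel] at step ih ⊢
    linarith

/-- **Exact energy conservation for the unforced two-step leap-frog scheme.**
With `Shalf k` denoting `Σ^{k+1/2}`, the scheme
`Σ^{k+1/2} = Σ^{k−1/2} + τ W E v^k` (k ≥ 1) and `A v^{k+1} = A v^k − τ E* Σ^{k+1/2}` (k ≥ 0)
conserves the twisted discrete energy
`𝔈^k = (1/2)⟨A v^k, v^{k−1}⟩ + (1/2)⟨W⁻¹ Σ^{k−1/2}, Σ^{k−1/2}⟩`. -/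
theorem leapfrog_energy_conservation
    {H S : Type*}
    [NormedAddCommGroup H] [InnerProductSpace ℝ H] [CompleteSpace H]
    [NormedAddCommGroup S] [InnerProductSpace ℝ S] [CompleteSpace S]
    (A Ainv : H →L[ℝ] H) (W Winv : S →L[ℝ] S)
    (hA_symm : ∀ x y : H, ⟪A x, y⟫ = ⟪x, A y⟫)
    (hW_symm : ∀ x y : S, ⟪W x, y⟫ = ⟪x, W y⟫)
    (hAinv₁ : ∀ x, A (Ainv x) = x) (hAinv₂ : ∀ x, Ainv (A x) = x)
    (hWinv₁ : ∀ x, W (Winv x) = x) (hWinv₂ : ∀ x, Winv (W x) = x)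
    (E : H →L[ℝ] S) (Estar : S →L[ℝ] H)
    (hadj : ∀ (σ : S) (w : H), ⟪Estar σ, w⟫ = ⟪σ, E w⟫)
    (τ : ℝ) (hτ : 0 < τ)
    (v : ℕ → H) (Shalf : ℕ → S)
    (hstress : ∀ k : ℕ, 1 ≤ k → Shalf k = Shalf (k - 1) + τ • W (E (v k)))
    (hvel : ∀ k : ℕ, A (v (k + 1)) = A (v k) - τ • Estar (Shalf k)) :
    ∀ k : ℕ, 1 ≤ k →
      (1/2) * ⟪A (v k), v (k - 1)⟫ + (1/2) * ⟪Winv (Shalf (k - 1)), Shalf (k - 1)⟫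
        = (1/2) * ⟪A (v 1), v 0⟫ + (1/2) * ⟪Winv (Shalf 0), Shalf 0⟫ :=
  leapfrog_energy_conservation_general A W Winv hA_symm hW_symm hWinv₁ hWinv₂ E Estar hadj τ v Shalf
    hstress hvel
end
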